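/- The nine quadratic polynomials q₁ = 4(y − z)(2y + x − 2z), q₂ = −4y(x − 2y), q₃ = 4(x − z)(x − 2z), q₄ = 4y(y + z − 1), q₅ = 4(2x + y − z − 1)(x − 1), q₆ = 4(2x − y − z − 1)(x − z), q₇ = 4(x − 1)(2x − y − 1), q₈ = 4(2x + y − 2z − 1)(x − z), q₉ = 4(x − 1)(x + z − 1) are linearly independent in the real vector space of polynomials in the three variables x, y, z. -/
import Mathlib


open MvPolynomial

noncomputable section

/-- The variable `x` in `ℝ[x,y,z]`. -/
def px : MvPolynomial (Fin 3) ℝ := X 0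
/-- The variable `y` in `ℝ[x,y,z]`. -/
def py : MvPolynomial (Fin 3) ℝ := X 1
/-- The variable `z` in `ℝ[x,y,z]`. -/
def pz : MvPolynomial (Fin 3) ℝ := X 2

/-- The nine quadratic polynomials arising as the divergences of the nine mapped
`P₄` nonconforming bubble functions on a tetrahedron. -/
def divBubbles : Fin 9 → MvPolynomial (Fin 3) ℝ :=
  ![4 * (py - pz) * (2 * py + px - 2 * pz),
    -(4 * py * (px - 2 * py)),
    4 * (px - pz) * (px - 2 * pz),
    4 * py * (py + pz - 1),
    4 * (2 * px + py - pz - 1) * (px - 1),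
    4 * (2 * px - py - pz - 1) * (px - pz),
    4 * (px - 1) * (2 * px - py - 1),
    4 * (2 * px + py - 2 * pz - 1) * (px - pz),
    4 * (px - 1) * (px + pz - 1)]

lemma finsucc3 : (Fin.succ 2 : Fin 9) = 3 := rfl
lemma finsucc4 : ((Fin.succ 2).succ : Fin 9) = 4 := rfl
lemma finsucc5 : ((Fin.succ 2).succ.succ : Fin 9) = 5 := rfl
lemma finsucc6 : ((Fin.succ 2).succ.succ.succ : Fin 9) = 6 := rfl
lemma finsucc7 : ((Fin.succ 2).succ.succ.succ.succ : Fin 9) = 7 := rfl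
lemma finsucc8 : ((Fin.succ 2).succ.succ.succ.succ.succ : Fin 9) = 8 := rfl

/-- The nine quadratic polynomials `q₁, …, q₉` (the divergences of the nine mapped
bubble functions) are linearly independent over `ℝ` in `ℝ[x, y, z]`. -/
theorem divBubbles_linearIndependent : LinearIndependent ℝ divBubbles := by
  rw [Fintype.linearIndependent_iff]
  intro g hg
  have h : ∀ a b c : ℝ,
      g 0 * (4 * (b - c) * (2 * b + a - 2 * c)) +
      g 1 * (-(4 * b * (a - 2 * b))) +
      g 2 * (4 * (a - c) * (a - 2 * c)) +
      g 3 * (4 * b * (b + c - 1)) +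
      g 4 * (4 * (2 * a + b - c - 1) * (a - 1)) +
      g 5 * (4 * (2 * a - b - c - 1) * (a - c)) +
      g 6 * (4 * (a - 1) * (2 * a - b - 1)) +
      g 7 * (4 * (2 * a + b - 2 * c - 1) * (a - c)) +
      g 8 * (4 * (a - 1) * (a + c - 1)) = 0 := by
    intro a b c
    have := congrArg (aeval (![a, b, c] : Fin 3 → ℝ)) hg
    simp only [divBubbles, px, py, pz, Fin.sum_univ_succ, Finset.sum_empty, map_add, map_zero,
      map_smul, map_mul, map_sub, map_neg, map_ofNat, aeval_X, map_one, smul_eq_mul,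
      Matrix.cons_val_zero, Matrix.cons_val_one, Matrix.head_cons, Fin.succ_zero_eq_one,
      Fin.succ_one_eq_two, Matrix.cons_val_succ, add_zero, Fin.sum_univ_zero,
      Matrix.cons_val_two, Matrix.tail_cons, finsucc3, finsucc4, finsucc5, finsucc6,
      finsucc7, finsucc8] at this
    linear_combination this
  have e1 := h 0 0 0
  have e2 := h 1 0 0
  have e3 := h 0 1 0
  have e4 := h 0 0 1
  have e5 := h 1 1 0
  have e6 := h 1 0 1
  have e7 := h 0 1 1
  have e8 := h 2 0 0
  have e9 := h 0 2 0
  norm_num at e1 e2 e3 e4 e5 e6 e7 e8 e9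
  have h0 : g 0 = 0 := by linarith
  have h1 : g 1 = 0 := by linarith
  have h2 : g 2 = 0 := by linarith
  have h3 : g 3 = 0 := by linarith
  have h4 : g 4 = 0 := by linarith
  have h5 : g 5 = 0 := by linarith
  have h6 : g 6 = 0 := by linarith
  have h7 : g 7 = 0 := by linarith
  have h8 : g 8 = 0 := by linarith
  intro i
  fin_cases i <;> assumption

end
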